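/- arXiv:2312.10485 — 4 statements merged into one kernel-verified Lean document; each statement's English description precedes it below -/
import Mathlib

section
/- Let G be a connected graph of order at least 2 with diameter d, and let P = v_0, v_1, ..., v_d be a diametral path (a shortest path between two vertices at distance d). Then the set M = {v_i : i ≡ 0 (mod 3), 0 ≤ i ≤ d} is a multipacking of G of size ⌈(d+1)/3⌉. -/
open Finset

variable {V : Type*} [Fintype V] [DecidableEq V]

/-- The closed ball of radius `r` around `v` in the shortest-path metric of `G`. -/
noncomputable def gball (G : SimpleGraph V) (v : V) (r : ℕ) : Finset V :=
  Finset.univ.filter (fun u => G.dist v u ≤ r)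

/-- `M` is a multipacking of `G` if every ball of radius `r ≥ 1` contains at most `r`
vertices of `M`. -/
def IsMultipacking (G : SimpleGraph V) (M : Finset V) : Prop :=
  ∀ v : V, ∀ r : ℕ, 1 ≤ r → (M ∩ gball G v r).card ≤ r

/-- The multipacking number of `G`. -/
noncomputable def mp (G : SimpleGraph V) : ℕ :=
  sSup {n | ∃ M : Finset V, IsMultipacking G M ∧ M.card = n}

/-- Eccentricity of a vertex. -/
noncomputable def ecc (G : SimpleGraph V) (v : V) : ℕ :=
  Finset.univ.sup (fun u => G.dist v u)

/-- The diameter of `G`. -/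
noncomputable def gdiam (G : SimpleGraph V) : ℕ :=
  Finset.univ.sup (fun p : V × V => G.dist p.1 p.2)

/-- The radius of `G`. -/
noncomputable def grad (G : SimpleGraph V) : ℕ :=
  sInf {e | ∃ v : V, ecc G v = e}

/-- A dominating broadcast on `G`: a function `f : V → {0, …, diam G}` such that every
vertex hears a broadcast from some tower. -/
def IsDominatingBroadcast (G : SimpleGraph V) (f : V → ℕ) : Prop :=
  (∀ v : V, f v ≤ gdiam G) ∧ ∀ u : V, ∃ v : V, 0 < f v ∧ G.dist u v ≤ f v

/-- The broadcast domination number of `G`. -/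
noncomputable def gammaB (G : SimpleGraph V) : ℕ :=
  sInf {c | ∃ f : V → ℕ, IsDominatingBroadcast G f ∧ ∑ v : V, f v = c}

/-- A graph is chordal if every cycle of length at least 4 has a chord, i.e. an edge of `G`
joining two vertices of the cycle which is not an edge of the cycle. -/
def IsChordal (G : SimpleGraph V) : Prop :=
  ∀ ⦃v : V⦄ (c : G.Walk v v), c.IsCycle → 4 ≤ c.length →
    ∃ u w : V, u ∈ c.support ∧ w ∈ c.support ∧ G.Adj u w ∧ s(u, w) ∉ c.edges

/-- `G` is `δ`-hyperbolic: for any four vertices, the two larger of the three pairwise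
distance sums differ by at most `2δ`. -/
def IsHyperbolic (G : SimpleGraph V) (δ : ℕ) : Prop :=
  ∀ u v w x : V,
    G.dist u v + G.dist w x ≤
      max (G.dist u w + G.dist v x) (G.dist u x + G.dist v w) + 2 * δ

lemma length_drop_aux {V : Type*} {G : SimpleGraph V} {u v : V} (p : G.Walk u v) (n : ℕ) :
    (p.drop n).length = p.length - n := by
  induction p generalizing n with
  | nil => simp [SimpleGraph.Walk.drop]
  | cons h q ih =>
    cases n with
    | zero => simp [SimpleGraph.Walk.drop]
    | succ n => simp [SimpleGraph.Walk.drop, ih]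

lemma dist_getVert_right_aux {V : Type*} {G : SimpleGraph V} {x y : V} (p : G.Walk x y) (i : ℕ) :
    G.dist (p.getVert i) y ≤ p.length - i := by
  have := SimpleGraph.dist_le (p.drop i)
  rwa [length_drop_aux] at this

lemma dist_getVert_left_aux {V : Type*} {G : SimpleGraph V} {x y : V} (p : G.Walk x y) {i : ℕ}
    (hi : i ≤ p.length) : G.dist x (p.getVert i) ≤ i := by
  have h := SimpleGraph.dist_le (p.reverse.drop (p.length - i))
  rw [length_drop_aux, SimpleGraph.Walk.length_reverse, SimpleGraph.Walk.getVert_reverse] at h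
  rw [SimpleGraph.dist_comm]
  have e1 : p.length - (p.length - i) = i := by omega
  rw [e1] at h
  exact h.trans (by omega)

lemma le_dist_getVert_aux {V : Type*} {G : SimpleGraph V} (hG : G.Connected) {x y : V}
    (p : G.Walk x y) (hshortest : p.length = G.dist x y) {i j : ℕ}
    (hij : i ≤ j) (hj : j ≤ p.length) :
    j - i ≤ G.dist (p.getVert i) (p.getVert j) := by
  have h1 := dist_getVert_left_aux p (le_trans hij hj)
  have h2 := dist_getVert_right_aux p j
  have h3 := hG.dist_triangle (u := x) (v := p.getVert i) (w := y)
  have h4 := hG.dist_triangle (u := p.getVert i) (v := p.getVert j) (w := y)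
  omega

/-- Every third vertex of a diametral path of a connected graph of order at least 2 forms a
multipacking of size `⌈(d+1)/3⌉`, where `d` is the diameter. -/
theorem diametral_path_multipacking (G : SimpleGraph V) (hG : G.Connected)
    (hcard : 2 ≤ Fintype.card V) {x y : V} (p : G.Walk x y) (hpath : p.IsPath)
    (hshortest : p.length = G.dist x y) (hdiam : p.length = gdiam G) :
    IsMultipacking G
        (((Finset.range (p.length + 1)).filter (fun i => i % 3 = 0)).image p.getVert) ∧
      (((Finset.range (p.length + 1)).filter (fun i => i % 3 = 0)).image p.getVert).card
        = (gdiam G + 3) / 3 := by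
  classical
  set L := p.length with hL
  have key : ∀ i j : ℕ, i ≤ j → j ≤ L → j - i ≤ G.dist (p.getVert i) (p.getVert j) :=
    fun i j hij hj => le_dist_getVert_aux hG p hshortest hij hj
  constructor
  · intro v r hr
    set S : Finset ℕ := (Finset.range (L + 1)).filter
      (fun i => i % 3 = 0 ∧ G.dist v (p.getVert i) ≤ r) with hS
    have hsub : ((Finset.range (L + 1)).filter (fun i => i % 3 = 0)).image p.getVert ∩
        gball G v r ⊆ S.image p.getVert := by
      intro u hu
      rw [Finset.mem_inter, Finset.mem_image] at hu
      obtain ⟨⟨i, hi, rfl⟩, hball⟩ := hu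
      rw [gball, Finset.mem_filter] at hball
      rw [Finset.mem_filter, Finset.mem_range] at hi
      exact Finset.mem_image.mpr ⟨i, Finset.mem_filter.mpr ⟨Finset.mem_range.mpr hi.1,
        hi.2, hball.2⟩, rfl⟩
    refine le_trans (Finset.card_le_card hsub) (le_trans Finset.card_image_le ?_)
    rcases S.eq_empty_or_nonempty with hSe | hSne
    · simp [hSe]
    · set m := S.min' hSne with hm
      have hmS := Finset.mem_filter.mp (S.min'_mem hSne)
      have hmr : m < L + 1 := Finset.mem_range.mp hmS.1
      have hm0 : m % 3 = 0 := hmS.2.1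
      have hmd : G.dist v (p.getVert m) ≤ r := hmS.2.2
      have hsub2 : S ⊆ (Finset.range (2 * r / 3 + 1)).image (fun k => m + 3 * k) := by
        intro i hiS
        have hmi : m ≤ i := S.min'_le i hiS
        have hiS' := Finset.mem_filter.mp hiS
        have hir := Finset.mem_range.mp hiS'.1
        obtain ⟨hi0, hidist⟩ := hiS'.2
        have hd1 : i - m ≤ G.dist (p.getVert m) (p.getVert i) := key m i hmi (by omega)
        have hd2 : G.dist (p.getVert m) (p.getVert i) ≤
            G.dist (p.getVert m) v + G.dist v (p.getVert i) :=
          hG.dist_triangle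
        have hd3 : G.dist (p.getVert m) v = G.dist v (p.getVert m) := SimpleGraph.dist_comm ..
        have hle : i - m ≤ 2 * r := by omega
        refine Finset.mem_image.mpr ⟨(i - m) / 3, Finset.mem_range.mpr ?_, ?_⟩ <;> omega
      have := Finset.card_le_card hsub2
      have := Finset.card_image_le (s := Finset.range (2 * r / 3 + 1)) (f := fun k => m + 3 * k)
      simp only [Finset.card_range] at this
      omega
  · have hinj : Set.InjOn p.getVert
        ((Finset.range (L + 1)).filter (fun i => i % 3 = 0) : Finset ℕ) := by
      intro i hi j hj hij
      simp only [Finset.coe_filter, Finset.mem_range, Set.mem_setOf_eq] at hi hj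
      by_contra hne
      rcases Nat.lt_or_ge i j with h | h
      · have := key i j (le_of_lt h) (by omega)
        rw [hij, SimpleGraph.dist_self] at this; omega
      · have hlt : j < i := lt_of_le_of_ne h (Ne.symm hne)
        have := key j i (le_of_lt hlt) (by omega)
        rw [hij, SimpleGraph.dist_self] at this; omega
    rw [Finset.card_image_of_injOn hinj]
    have heq : (Finset.range (L + 1)).filter (fun i => i % 3 = 0) =
        (Finset.range (L / 3 + 1)).image (fun k => 3 * k) := by
      ext i
      simp only [Finset.mem_filter, Finset.mem_range, Finset.mem_image]
      constructor
      · rintro ⟨h1, h2⟩; exact ⟨i / 3, by omega, by omega⟩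
      · rintro ⟨k, hk, rfl⟩; omega
    rw [heq, Finset.card_image_of_injective _ (fun a b h => by omega), Finset.card_range,
      ← hdiam]
    omega
end

section
/- For every connected graph G of order at least 2 with diameter d, the multipacking number satisfies ⌈(d+1)/3⌉ ≤ mp(G). -/
open Finset

variable {V : Type*} [Fintype V] [DecidableEq V]

lemma dist_getVert_le (G : SimpleGraph V) (hG : G.Connected) {u v : V} (p : G.Walk u v)
    (i k : ℕ) : G.dist (p.getVert i) (p.getVert (i + k)) ≤ k := by
  induction k with
  | zero => simp [SimpleGraph.dist_self]
  | succ k ih =>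
    have hstep : G.dist (p.getVert (i + k)) (p.getVert (i + k + 1)) ≤ 1 := by
      by_cases h : i + k < p.length
      · have := p.adj_getVert_succ h
        exact le_of_eq (SimpleGraph.dist_eq_one_iff_adj.mpr this)
      · push_neg at h
        have h1 : p.getVert (i + k) = v := p.getVert_of_length_le h
        have h2 : p.getVert (i + k + 1) = v := p.getVert_of_length_le (le_trans h (by omega))
        rw [h1, h2, SimpleGraph.dist_self]; omega
    calc G.dist (p.getVert i) (p.getVert (i + (k+1)))
        ≤ G.dist (p.getVert i) (p.getVert (i + k))
          + G.dist (p.getVert (i + k)) (p.getVert (i + k + 1)) := by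
          have := hG.dist_triangle (u := p.getVert i) (v := p.getVert (i+k))
            (w := p.getVert (i + k + 1))
          simpa [Nat.add_assoc] using this
      _ ≤ k + 1 := by omega

lemma dist_getVert_geodesic (G : SimpleGraph V) (hG : G.Connected) {u v : V} (p : G.Walk u v)
    (hp : p.length = G.dist u v) {i j : ℕ} (hij : i ≤ j) (hj : j ≤ p.length) :
    G.dist (p.getVert i) (p.getVert j) = j - i := by
  have hle : G.dist (p.getVert i) (p.getVert j) ≤ j - i := by
    have := dist_getVert_le G hG p i (j - i)
    rwa [Nat.add_sub_cancel' hij] at this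
  have h1 : G.dist u (p.getVert i) ≤ i := by
    have := dist_getVert_le G hG p 0 i
    simpa using this
  have h2 : G.dist (p.getVert j) v ≤ p.length - j := by
    have := dist_getVert_le G hG p j (p.length - j)
    rwa [Nat.add_sub_cancel' hj, p.getVert_length] at this
  have t1 : G.dist u v ≤ G.dist u (p.getVert i) + G.dist (p.getVert i) v := hG.dist_triangle
  have t2 : G.dist (p.getVert i) v ≤ G.dist (p.getVert i) (p.getVert j)
      + G.dist (p.getVert j) v := hG.dist_triangle
  omega

/-- For a connected graph of order at least 2 with diameter `d`, `⌈(d+1)/3⌉ ≤ mp G`. -/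
theorem ceil_diam_le_mp (G : SimpleGraph V) (hG : G.Connected)
    (hcard : 2 ≤ Fintype.card V) :
    (gdiam G + 3) / 3 ≤ mp G := by
  classical
  set d := gdiam G with hdset
  -- diameter is attained
  have hne : Nonempty V := Fintype.card_pos_iff.mp (by omega)
  obtain ⟨⟨u, v⟩, -, hd⟩ := Finset.exists_mem_eq_sup (Finset.univ : Finset (V × V))
    Finset.univ_nonempty (fun p : V × V => G.dist p.1 p.2)
  obtain ⟨p, hp⟩ := hG.exists_walk_length_eq_dist u v
  have hplen : p.length = d := by rw [hp, hdset]; exact hd.symm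
  set n := d / 3 + 1 with hn
  have hbound : ∀ i, i ∈ Finset.range n → 3 * i ≤ p.length := by
    intro i hi
    rw [Finset.mem_range] at hi
    have : i ≤ d / 3 := by omega
    have := Nat.div_mul_le_self d 3
    rw [hplen]; omega
  have hdist : ∀ i ∈ Finset.range n, ∀ j ∈ Finset.range n, i ≤ j →
      G.dist (p.getVert (3 * i)) (p.getVert (3 * j)) = 3 * j - 3 * i := by
    intro i hi j hj hij
    exact dist_getVert_geodesic G hG p (by rw [hp]) (by omega) (hbound j hj)
  have hinj : Set.InjOn (fun i => p.getVert (3 * i)) (Finset.range n) := by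
    intro i hi j hj h
    rcases le_total i j with hij | hij
    · have := hdist i (by simpa using hi) j (by simpa using hj) hij
      simp only at h
      rw [h, SimpleGraph.dist_self] at this
      omega
    · have := hdist j (by simpa using hj) i (by simpa using hi) hij
      simp only at h
      rw [← h, SimpleGraph.dist_self] at this
      omega
  set M : Finset V := (Finset.range n).image (fun i => p.getVert (3 * i)) with hM
  have hMcard : M.card = n := by
    rw [hM, Finset.card_image_of_injOn hinj, Finset.card_range]
  have hMpack : IsMultipacking G M := by
    intro w r hr
    by_contra hcon
    push_neg at hcon
    set S : Finset ℕ := (Finset.range n).filter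
      (fun i => p.getVert (3 * i) ∈ gball G w r) with hS
    have hsub : M ∩ gball G w r ⊆ S.image (fun i => p.getVert (3 * i)) := by
      intro x hx
      rw [Finset.mem_inter, hM, Finset.mem_image] at hx
      obtain ⟨⟨i, hi, hxi⟩, hxb⟩ := hx
      exact Finset.mem_image.mpr ⟨i, Finset.mem_filter.mpr ⟨hi, hxi ▸ hxb⟩, hxi⟩
    have hScard : r + 1 ≤ S.card := by
      calc r + 1 ≤ (M ∩ gball G w r).card := hcon
        _ ≤ (S.image (fun i => p.getVert (3 * i))).card := Finset.card_le_card hsub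
        _ ≤ S.card := Finset.card_image_le
    have hSne : S.Nonempty := Finset.card_pos.mp (by omega)
    set a := S.min' hSne with ha
    set b := S.max' hSne with hb
    have haS : a ∈ S := S.min'_mem hSne
    have hbS : b ∈ S := S.max'_mem hSne
    have hab : a ≤ b := S.min'_le b hbS
    have hIcc : S ⊆ Finset.Icc a b := by
      intro x hx
      exact Finset.mem_Icc.mpr ⟨S.min'_le x hx, S.le_max' x hx⟩
    have hcard2 : S.card ≤ b - a + 1 := by
      have := Finset.card_le_card hIcc
      rwa [Nat.card_Icc, Nat.succ_sub hab] at this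
    have hrab : r ≤ b - a := by omega
    have haR : a ∈ Finset.range n := (Finset.mem_filter.mp haS).1
    have hbR : b ∈ Finset.range n := (Finset.mem_filter.mp hbS).1
    have hdab : G.dist (p.getVert (3 * a)) (p.getVert (3 * b)) = 3 * b - 3 * a :=
      hdist a haR b hbR hab
    have hwa : G.dist w (p.getVert (3 * a)) ≤ r := by
      have := (Finset.mem_filter.mp haS).2
      simpa [gball] using this
    have hwb : G.dist w (p.getVert (3 * b)) ≤ r := by
      have := (Finset.mem_filter.mp hbS).2
      simpa [gball] using this
    have htri : G.dist (p.getVert (3 * a)) (p.getVert (3 * b)) ≤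
        G.dist (p.getVert (3 * a)) w + G.dist w (p.getVert (3 * b)) := hG.dist_triangle
    rw [SimpleGraph.dist_comm (u := p.getVert (3 * a)) (v := w)] at htri
    omega
  have hmem : n ∈ {m | ∃ M : Finset V, IsMultipacking G M ∧ M.card = m} :=
    ⟨M, hMpack, hMcard⟩
  have hbdd : BddAbove {m | ∃ M : Finset V, IsMultipacking G M ∧ M.card = m} := by
    refine ⟨Fintype.card V, ?_⟩
    rintro m ⟨M', -, rfl⟩
    exact M'.card_le_univ.trans_eq (Finset.card_univ)
  have : n ≤ mp G := le_csSup hbdd hmem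
  omega
end

section
/- If G is a connected chordal graph with radius r and diameter d, then 2r ≤ d + 2. -/
open Finset

variable {V : Type*} [Fintype V] [DecidableEq V]

/-!
A finite chordal graph has a simplicial vertex `s` (Dirac), and deleting `s` changes no distance
between the remaining vertices. Induction on the number of vertices then gives a Helly-type
property: if cliques `K i` with radii `r i` satisfy `d(K i, K j) ≤ r i + r j + 1` pairwise, some
clique `Q` comes within `r i` of every `K i`; deleting `s` only replaces a ball around `{s}` by the
ball of radius one less around the neighbourhood of `s`. For the singletons of all vertices with
radius `⌊d / 2⌋`, any vertex of `Q` has eccentricity at most `⌊d / 2⌋ + 1`.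
-/

open SimpleGraph Walk

universe u

namespace SimpleGraph.Walk

variable {W : Type*} {G : SimpleGraph W}

theorem exists_length_lt_of_isChord {u v a b : W} (p : G.Walk u v) (h : p.IsChord s(a, b)) :
    ∃ q : G.Walk u v, q.support ⊆ p.support ∧ q.length < p.length := by
  classical
  induction p generalizing a b with
  | nil =>
    obtain ⟨hab, -, ha, hb⟩ := isChord_sym2Mk.mp h
    simp only [support_nil, List.mem_singleton] at ha hb
    exact absurd (ha.trans hb.symm) hab.ne
  | @cons x y v hxy q ih =>
    obtain ⟨hab, hne, ha, hb⟩ := isChord_sym2Mk.mp h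
    rw [edges_cons, List.mem_cons, not_or] at hne
    -- a chord from the first vertex `x` skips the part of `q` before its other end
    have shortcut : ∀ {c}, c ∈ q.support → G.Adj x c → s(x, c) ≠ s(x, y) →
        ∃ q' : G.Walk x v, q'.support ⊆ (cons hxy q).support ∧ q'.length < (cons hxy q).length := by
      intro c hc hxc hcy
      have hlen := congrArg length (q.take_spec hc)
      rw [length_append] at hlen
      have : (q.takeUntil c hc).length ≠ 0 := fun h0 => hcy (by rw [eq_of_length_eq_zero h0])
      refine ⟨cons hxc (q.dropUntil c hc), ?_, by simp only [length_cons]; omega⟩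
      rw [support_cons, support_cons]
      exact List.cons_subset_cons _ (q.support_dropUntil_subset_support hc)
    rw [support_cons, List.mem_cons] at ha hb
    by_cases ha' : a ∈ q.support <;> by_cases hb' : b ∈ q.support
    · obtain ⟨q', hsub, hlen⟩ := ih (isChord_sym2Mk.mpr ⟨hab, hne.2, ha', hb'⟩)
      refine ⟨cons hxy q', ?_, by simp only [length_cons]; omega⟩
      rw [support_cons, support_cons]
      exact List.cons_subset_cons _ hsub
    · obtain rfl := hb.resolve_right hb'
      exact shortcut ha' hab.symm (by rw [Sym2.eq_swap]; exact hne.1)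
    · obtain rfl := ha.resolve_right ha'
      exact shortcut hb' hab hne.1
    · obtain rfl := ha.resolve_right ha'
      exact absurd (hb.resolve_right hb') hab.ne'

theorem exists_isPath_isChordless {u v : W} (p : G.Walk u v) :
    ∃ q : G.Walk u v, q.support ⊆ p.support ∧ q.IsPath ∧ q.IsChordless := by
  classical
  have hex : ∃ n, ∃ q : G.Walk u v, q.support ⊆ p.support ∧ q.length = n :=
    ⟨_, p, List.Subset.refl _, rfl⟩
  obtain ⟨q, hq, hqlen⟩ := Nat.find_spec hex
  have hmin : ∀ q' : G.Walk u v, q'.support ⊆ q.support → q.length ≤ q'.length :=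
    fun q' hsub => hqlen ▸ Nat.find_min' hex ⟨q', List.Subset.trans hsub hq, rfl⟩
  refine ⟨q, hq, ?_, fun e he => ?_⟩
  · rw [← bypass_eq_self_of_length_le_length_bypass q
      (hmin _ (support_bypass_subset_support q))]
    exact bypass_isPath q
  · induction e using Sym2.ind
    obtain ⟨q', hsub, hlt⟩ := exists_length_lt_of_isChord q he
    exact absurd (hmin q' hsub) (not_le.mpr hlt)

end SimpleGraph.Walk

variable {W : Type*} {G : SimpleGraph W}

theorem SimpleGraph.IsClique.dist_le_one {Q : Set W} (hQ : G.IsClique Q) {u v : W} (hu : u ∈ Q)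
    (hv : v ∈ Q) : G.dist u v ≤ 1 := by
  rcases eq_or_ne u v with rfl | huv
  · simp
  · exact (dist_eq_one_iff_adj.mpr (hQ hu hv huv)).le

theorem SimpleGraph.Reachable.exists_adj_dist_add_one {s w : W} (h : G.Reachable s w)
    (hsw : s ≠ w) : ∃ q, G.Adj s q ∧ G.dist q w + 1 = G.dist s w := by
  obtain ⟨p, hp⟩ := h.exists_walk_length_eq_dist
  cases p with
  | nil => exact absurd rfl hsw
  | @cons _ q _ hsq p =>
    refine ⟨q, hsq, le_antisymm ?_ ?_⟩
    · have := dist_le p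
      rw [length_cons] at hp
      omega
    · obtain ⟨p', hp'⟩ := p.reachable.exists_walk_length_eq_dist
      simpa [hp'] using dist_le (cons hsq p')

theorem SimpleGraph.Reachable.exists_eq_or_adj_dist_le {s w : W} (h : G.Reachable s w) {r : ℕ}
    (hsw : G.dist s w ≤ r + 1) : ∃ q, (q = s ∨ G.Adj s q) ∧ G.dist q w ≤ r := by
  by_cases hr : G.dist s w ≤ r
  · exact ⟨s, Or.inl rfl, hr⟩
  obtain ⟨q, hsq, hq⟩ := h.exists_adj_dist_add_one fun h => hr (by simp [h])
  exact ⟨q, Or.inr hsq, by omega⟩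

theorem IsChordal.adj_of_walk (hG : IsChordal G) {b x y : W}
    (hbx : G.Adj b x) (hby : G.Adj b y) (hxy : x ≠ y) (p : G.Walk x y)
    (hp : ∀ z ∈ p.support, z ≠ x → z ≠ y → z ≠ b ∧ ¬G.Adj b z) : G.Adj x y := by
  by_contra hnxy
  obtain ⟨q, hsub, hpath, hchordless⟩ := p.exists_isPath_isChordless
  have hq : ∀ z ∈ q.support, z ≠ x → z ≠ y → z ≠ b ∧ ¬G.Adj b z := fun z hz => hp z (hsub hz)
  have hlen : 2 ≤ q.length := by
    by_contra! h
    interval_cases hl : q.length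
    · exact hxy (eq_of_length_eq_zero hl)
    · exact hnxy (adj_of_length_eq_one hl)
  have hbq : b ∉ q.support := fun hb => (hq b hb hbx.ne hby.ne).1 rfl
  let c : G.Walk b b := cons hbx (q.concat hby.symm)
  have hcyc : c.IsCycle := by
    refine (cons_isCycle_iff _ _).mpr ⟨hpath.concat hbq _, fun he => ?_⟩
    rw [edges_concat, List.concat_eq_append, List.mem_append, List.mem_singleton] at he
    rcases he with he | he
    · exact hbq (q.fst_mem_support_of_mem_edges he)
    · rcases Sym2.eq_iff.mp he with ⟨h1, -⟩ | ⟨-, h2⟩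
      · exact hby.ne h1
      · exact hxy h2
  obtain ⟨u, w, hu, hw, huw, hne⟩ := hG c hcyc (by simp [c]; omega)
  have hmem : ∀ {z}, z ∈ c.support → z = b ∨ z ∈ q.support := by
    intro z hz
    simp only [c, support_cons, support_concat, List.mem_cons, List.mem_append] at hz
    tauto
  -- a chord through `b` would end at `x` or `y`, whose edges to `b` lie on `c`
  have hb_end : ∀ {z}, z ∈ q.support → G.Adj b z → s(b, z) ∈ c.edges := by
    intro z hz hbz
    by_cases hzx : z = x
    · simp [c, hzx]
    by_cases hzy : z = y
    · simp [c, hzy, Sym2.eq_swap]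
    exact absurd hbz (hq z hz hzx hzy).2
  rcases hmem hu with rfl | hu' <;> rcases hmem hw with rfl | hw'
  · exact huw.ne rfl
  · exact hne (hb_end hw' huw)
  · exact hne (Sym2.eq_swap ▸ hb_end hu' huw.symm)
  · exact hne (by simp [c, hchordless.mem_edges hu' hw' huw])

theorem IsChordal.induce (hG : IsChordal G) (T : Set W) : IsChordal (G.induce T) := by
  intro v c hc hlen
  let f := (Embedding.induce T : G.induce T ↪g G).toHom
  obtain ⟨u, w, hu, hw, huw, hne⟩ :=
    hG (c.map f) (hc.map Subtype.val_injective) (by rwa [length_map])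
  rw [Walk.support_map, List.mem_map] at hu hw
  obtain ⟨u, hu, rfl⟩ := hu
  obtain ⟨w, hw, rfl⟩ := hw
  exact ⟨u, w, hu, hw, huw, fun h => hne (by rw [Walk.edges_map]; exact List.mem_map_of_mem h)⟩

def IsSimplicial (G : SimpleGraph W) (s : W) : Prop :=
  G.IsClique (G.neighborSet s)

theorem IsSimplicial.of_induce {T : Set W} {v : T} (hv : IsSimplicial (G.induce T) v)
    (hN : G.neighborSet v ⊆ T) : IsSimplicial G v := by
  intro x hx y hy hxy
  exact hv (show (G.induce T).Adj v ⟨x, hN hx⟩ from hx) (show (G.induce T).Adj v ⟨y, hN hy⟩ from hy)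
    (fun h => hxy (congrArg Subtype.val h))

namespace IsSimplicial

variable {s : W} (hs : IsSimplicial G s)
include hs

theorem exists_walk_notMem_support {u v : W} (hu : u ≠ s) (hv : v ≠ s) (p : G.Walk u v) :
    ∃ q : G.Walk u v, s ∉ q.support ∧ q.length ≤ p.length := by
  induction hn : p.length using Nat.strong_induction_on generalizing u p with
  | _ n ih =>
  cases p with
  | nil => exact ⟨nil, by simpa using hu.symm, by omega⟩
  | @cons _ b _ hub p =>
    rw [length_cons] at hn
    by_cases hb : b = s
    · subst hb
      cases p with
      | nil => exact absurd rfl hv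
      | @cons _ c _ hbc p =>
        rw [length_cons] at hn
        by_cases hc : c = u
        · subst hc
          obtain ⟨q, hq, hlen⟩ := ih _ (by omega) hu p rfl
          exact ⟨q, hq, by omega⟩
        -- the two neighbours `u` and `c` of the simplicial vertex are adjacent
        · obtain ⟨q, hq, hlen⟩ :=
            ih _ (by rw [length_cons]; omega) hu (cons (hs hub.symm hbc (Ne.symm hc)) p) rfl
          exact ⟨q, hq, by rw [length_cons] at hlen; omega⟩
    · obtain ⟨q, hq, hlen⟩ := ih _ (by omega) hb p rfl
      exact ⟨cons hub q, by simp [hq, Ne.symm hu], by rw [length_cons]; omega⟩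

theorem exists_walk_induce_compl (x y : ({s}ᶜ : Set W)) (p : G.Walk x y) :
    ∃ q : (G.induce {s}ᶜ).Walk x y, q.length ≤ p.length := by
  obtain ⟨q, hq, hlen⟩ := hs.exists_walk_notMem_support x.2 y.2 p
  refine ⟨q.induce {s}ᶜ fun z hz => Set.mem_compl_singleton_iff.mpr (by rintro rfl; exact hq hz), ?_⟩
  rwa [← length_map (Embedding.induce _).toHom, map_induce]

theorem dist_induce_compl (hG : G.Connected) (x y : ({s}ᶜ : Set W)) :
    (G.induce {s}ᶜ).dist x y = G.dist x y := by
  obtain ⟨p, hp⟩ := hG.exists_walk_length_eq_dist x y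
  obtain ⟨q, hq⟩ := hs.exists_walk_induce_compl x y p
  refine le_antisymm ((dist_le q).trans (hp ▸ hq)) ?_
  obtain ⟨q', hq'⟩ := q.reachable.exists_walk_length_eq_dist
  rw [← hq', ← length_map (Embedding.induce _).toHom]
  exact dist_le _

theorem connected_induce_compl (hG : G.Connected) {v : W} (hv : v ≠ s) :
    (G.induce {s}ᶜ).Connected := by
  have : Nonempty ({s}ᶜ : Set W) := ⟨⟨v, hv⟩⟩
  refine Connected.mk fun x y => ?_
  obtain ⟨q, -⟩ := hs.exists_walk_induce_compl x y (hG.preconnected x y).some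
  exact q.reachable

theorem dist_le_of_adj (hG : G.Connected) {u w : W} (hsu : G.Adj s u) (hw : w ≠ s) :
    G.dist u w ≤ G.dist s w := by
  obtain ⟨q, hsq, hq⟩ := (hG s w).exists_adj_dist_add_one hw.symm
  have := hs.dist_le_one hsu hsq
  have : G.dist u w ≤ G.dist u q + G.dist q w := hG.dist_triangle
  omega

end IsSimplicial

theorem exists_isSimplicial_notMem_of_isClique
    (hP : ∀ {a b : W}, a ≠ b → ¬G.Adj b a → ∃ s, IsSimplicial G s ∧ s ≠ b ∧ ¬G.Adj b s)
    {S : Set W} (hS : G.IsClique S) {v : W} (hv : v ∉ S) : ∃ s ∉ S, IsSimplicial G s := by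
  by_cases hcomplete : ∀ x y : W, x ≠ y → G.Adj x y
  · exact ⟨v, hv, fun x _ y _ hxy => hcomplete x y hxy⟩
  push Not at hcomplete
  obtain ⟨x, y, hxy, hnxy⟩ := hcomplete
  obtain ⟨s₁, hs₁, hs₁x, hxs₁⟩ := hP hxy.symm hnxy
  by_cases hs₁S : s₁ ∈ S
  · obtain ⟨s₂, hs₂, hs₂s₁, hs₁s₂⟩ := hP (Ne.symm hs₁x) (fun h => hxs₁ h.symm)
    exact ⟨s₂, fun hs₂S => hs₁s₂ (hS hs₁S hs₂S (Ne.symm hs₂s₁)), hs₂⟩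
  · exact ⟨s₁, hs₁S, hs₁⟩

theorem IsChordal.exists_isClique_separator (hG : IsChordal G) {a b : W} (hab : a ≠ b)
    (hba : ¬G.Adj b a) :
    ∃ A S : Set W, a ∈ A ∧ (∀ v ∈ A, v ≠ b ∧ ¬G.Adj b v) ∧ S ⊆ G.neighborSet b ∧
      G.IsClique S ∧ ∀ v ∈ A, G.neighborSet v ⊆ A ∪ S := by
  -- `A` is the component of `a` in `G - N[b]` and `S` its neighbourhood
  let A : Set W := {v | ∃ p : G.Walk a v, ∀ z ∈ p.support, z ≠ b ∧ ¬G.Adj b z}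
  let S : Set W := {x | x ∉ A ∧ ∃ y ∈ A, G.Adj y x}
  have hA : ∀ v ∈ A, v ≠ b ∧ ¬G.Adj b v := fun v ⟨p, hp⟩ => hp v p.end_mem_support
  have hSb : S ⊆ G.neighborSet b := by
    rintro x ⟨hxA, y, ⟨p, hp⟩, hyx⟩
    by_contra hbx
    refine hxA ⟨p.concat hyx, fun z hz => ?_⟩
    rw [support_concat, List.mem_append, List.mem_singleton] at hz
    rcases hz with hz | rfl
    · exact hp z hz
    · exact ⟨fun hzb => (hp y p.end_mem_support).2 (hzb ▸ hyx).symm, hbx⟩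
  refine ⟨A, S, ⟨nil, by simpa using ⟨hab, hba⟩⟩, hA, hSb, ?_,
    fun v hv z hz => or_iff_not_imp_left.mpr fun hzA => ⟨hzA, v, hv, hz⟩⟩
  rintro x hx y hy hxy
  obtain ⟨x', ⟨px, hpx⟩, hx'x⟩ := hx.2
  obtain ⟨y', ⟨py, hpy⟩, hy'y⟩ := hy.2
  refine hG.adj_of_walk (hSb hx) (hSb hy) hxy
    (cons hx'x.symm ((px.reverse.append py).concat hy'y)) fun z hz hzx hzy => ?_
  simp only [support_cons, support_concat, List.mem_cons, List.mem_append, mem_support_append_iff,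
    support_reverse, List.mem_reverse, List.not_mem_nil, or_false] at hz
  rcases hz with rfl | (hz | hz) | rfl
  · exact absurd rfl hzx
  · exact hpx z hz
  · exact hpy z hz
  · exact absurd rfl hzy

theorem IsChordal.exists_isSimplicial_not_adj {W : Type u} [Finite W] {G : SimpleGraph W}
    (hG : IsChordal G) {a b : W} (hab : a ≠ b) (hba : ¬G.Adj b a) :
    ∃ s, IsSimplicial G s ∧ s ≠ b ∧ ¬G.Adj b s := by
  induction hn : Nat.card W using Nat.strong_induction_on generalizing W with
  | _ n ih =>
  obtain ⟨A, S, haA, hA, hSb, hS, hAS⟩ := hG.exists_isClique_separator hab hba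
  have hbT : b ∉ A ∪ S := fun h => h.elim (fun hb => (hA b hb).1 rfl) (fun hb => G.irrefl (hSb hb))
  -- `G[A ∪ S]` misses `b`, so the induction hypothesis applies to it
  have hH : ∀ {x y : ↥(A ∪ S)}, x ≠ y → ¬(G.induce (A ∪ S)).Adj y x →
      ∃ s, IsSimplicial (G.induce (A ∪ S)) s ∧ s ≠ y ∧ ¬(G.induce (A ∪ S)).Adj y s :=
    fun hxy hyx => ih _ (hn ▸ Finite.card_subtype_lt hbT) (hG.induce _) hxy hyx rfl
  obtain ⟨⟨s, hsT⟩, hsS, hs⟩ := exists_isSimplicial_notMem_of_isClique hH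
    (S := Subtype.val ⁻¹' S) (isClique_induce_iff.mpr (hS.subset (Set.image_preimage_subset _ _)))
    (v := ⟨a, Or.inl haA⟩) (fun haS => hba (hSb haS))
  have hsA : s ∈ A := hsT.resolve_right hsS
  exact ⟨s, hs.of_induce (hAS s hsA), hA s hsA⟩

theorem IsChordal.exists_isSimplicial {W : Type u} [Finite W] [Nonempty W] {G : SimpleGraph W}
    (hG : IsChordal G) : ∃ s, IsSimplicial G s := by
  obtain ⟨s, -, hs⟩ := exists_isSimplicial_notMem_of_isClique (hG.exists_isSimplicial_not_adj)
    (isClique_empty (G := G)) (Set.notMem_empty (Classical.arbitrary W))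
  exact ⟨s, hs⟩

/-- `(K', r')` is what remains of the ball of radius `r` around `K` after deleting `s`. -/
structure IsBallReduction (G : SimpleGraph W) (s : W) (K : Set W) (r : ℕ) (K' : Set W) (r' : ℕ) :
    Prop where
  nonempty : K'.Nonempty
  isClique : G.IsClique K'
  subset_compl : K' ⊆ {s}ᶜ
  subset_neighborSet : s ∈ K → K' ⊆ G.neighborSet s
  exists_dist_le_of_mem : ∀ u ∈ K, ∀ w ≠ s, ∃ u' ∈ K', G.dist u' w + r ≤ G.dist u w + r'
  exists_dist_le_of_mem_reduction : ∀ x, ∀ u' ∈ K', ∃ u ∈ K, G.dist x u + r' ≤ G.dist x u' + r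

namespace IsSimplicial

variable {s : W} (hs : IsSimplicial G s)
include hs

theorem isBallReduction_singleton (hG : G.Connected) {v : W} (hv : v ≠ s) {r : ℕ} (hr : 0 < r) :
    IsBallReduction G s {s} r (G.neighborSet s) (r - 1) where
  nonempty := by
    obtain ⟨q, hsq, -⟩ := (hG s v).exists_adj_dist_add_one hv.symm
    exact ⟨q, hsq⟩
  isClique := hs
  subset_compl _ h := (G.ne_of_adj h).symm
  subset_neighborSet _ := le_rfl
  exists_dist_le_of_mem := by
    rintro u rfl w hw
    obtain ⟨q, hsq, hq⟩ := (hG u w).exists_adj_dist_add_one hw.symm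
    exact ⟨q, hsq, by omega⟩
  exists_dist_le_of_mem_reduction x u' hu' := by
    refine ⟨s, rfl, ?_⟩
    have : G.dist x s ≤ G.dist x u' + G.dist u' s := hG.dist_triangle
    have : G.dist u' s = 1 := dist_eq_one_iff_adj.mpr (show G.Adj s u' from hu').symm
    omega

theorem isBallReduction_diff (hG : G.Connected) {K : Set W} (hK : G.IsClique K)
    (hKne : K.Nonempty) (hKs : K ≠ {s}) (r : ℕ) : IsBallReduction G s K r (K \ {s}) r := by
  have hne : (K \ {s}).Nonempty := Set.nonempty_iff_ne_empty.mpr fun h =>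
    hKs (hKne.subset_singleton_iff.mp (Set.sdiff_eq_empty.mp h))
  refine ⟨hne, hK.subset Set.sdiff_subset, fun _ h => h.2,
    fun hsK u hu => hK hsK hu.1 (Ne.symm hu.2), fun u hu w hw => ?_,
    fun x u' hu' => ⟨u', hu'.1, le_rfl⟩⟩
  by_cases hus : u = s
  · subst hus
    obtain ⟨y, hy⟩ := hne
    exact ⟨y, hy, by have := hs.dist_le_of_adj hG (hK hu hy.1 (Ne.symm hy.2)) hw; omega⟩
  · exact ⟨u, ⟨hu, hus⟩, le_rfl⟩

theorem exists_isBallReduction (hG : G.Connected) {v : W} (hv : v ≠ s) {K : Set W}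
    (hK : G.IsClique K) (hKne : K.Nonempty) {r : ℕ} (hr : K = {s} → r ≠ 0) :
    ∃ K' r', IsBallReduction G s K r K' r' := by
  by_cases hKs : K = {s}
  · subst hKs
    exact ⟨_, _, hs.isBallReduction_singleton hG hv (Nat.pos_of_ne_zero (hr rfl))⟩
  · exact ⟨_, _, hs.isBallReduction_diff hG hK hKne hKs r⟩

end IsSimplicial

namespace IsBallReduction

variable {s : W} {K₁ K₂ K₁' K₂' : Set W} {r₁ r₂ r₁' r₂' : ℕ}
  (h₁ : IsBallReduction G s K₁ r₁ K₁' r₁') (h₂ : IsBallReduction G s K₂ r₂ K₂' r₂')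
include h₁ h₂

theorem exists_dist_le_of_ne {u w : W} (hu : u ∈ K₁) (hw : w ∈ K₂) (hws : w ≠ s)
    (huw : G.dist u w ≤ r₁ + r₂ + 1) : ∃ u' ∈ K₁', ∃ w' ∈ K₂', G.dist u' w' ≤ r₁' + r₂' + 1 := by
  obtain ⟨u', hu', h₁u⟩ := h₁.exists_dist_le_of_mem u hu w hws
  obtain ⟨w', hw', h₂w⟩ :=
    h₂.exists_dist_le_of_mem w hw u' (h₁.subset_compl hu')
  rw [dist_comm (u := w'), dist_comm (u := w)] at h₂w
  exact ⟨u', hu', w', hw', by omega⟩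

theorem exists_dist_le (hs : IsSimplicial G s) {u w : W} (hu : u ∈ K₁) (hw : w ∈ K₂)
    (huw : G.dist u w ≤ r₁ + r₂ + 1) : ∃ u' ∈ K₁', ∃ w' ∈ K₂', G.dist u' w' ≤ r₁' + r₂' + 1 := by
  by_cases hws : w = s
  · by_cases hus : u = s
    · subst hus hws
      obtain ⟨u', hu'⟩ := h₁.nonempty
      obtain ⟨w', hw'⟩ := h₂.nonempty
      refine ⟨u', hu', w', hw', ?_⟩
      have := hs.dist_le_one (h₁.subset_neighborSet hu hu') (h₂.subset_neighborSet hw hw')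
      omega
    · rw [dist_comm] at huw
      obtain ⟨w', hw', u', hu', h⟩ := h₂.exists_dist_le_of_ne h₁ hw hu hus (by omega)
      exact ⟨u', hu', w', hw', by rw [dist_comm]; omega⟩
  · exact h₁.exists_dist_le_of_ne h₂ hu hw hws huw

end IsBallReduction

theorem IsChordal.exists_isClique_forall_exists_dist_le {W : Type u} [Finite W]
    {G : SimpleGraph W} (hG : IsChordal G) (hconn : G.Connected) {ι : Type*} (K : ι → Set W)
    (r : ι → ℕ) (hKne : ∀ i, (K i).Nonempty) (hK : ∀ i, G.IsClique (K i))
    (hKK : ∀ i j, ∃ u ∈ K i, ∃ w ∈ K j, G.dist u w ≤ r i + r j + 1) :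
    ∃ Q : Set W, Q.Nonempty ∧ G.IsClique Q ∧ ∀ i, ∃ q ∈ Q, ∃ u ∈ K i, G.dist q u ≤ r i := by
  induction hn : Nat.card W using Nat.strong_induction_on generalizing W r with
  | _ n ih =>
  have := hconn.nonempty
  obtain ⟨s, hs⟩ := hG.exists_isSimplicial
  by_cases hsingle : ∀ v, v = s
  · refine ⟨{s}, Set.singleton_nonempty s, isClique_singleton s, fun i => ?_⟩
    obtain ⟨u, hu⟩ := hKne i
    exact ⟨s, rfl, u, hu, by simp [hsingle u]⟩
  push Not at hsingle
  obtain ⟨v, hv⟩ := hsingle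
  by_cases hzero : ∃ i, K i = {s} ∧ r i = 0
  -- a radius-zero ball at `s` forces `s ∈ Q`; the closed neighbourhood of `s` works
  · obtain ⟨i₀, hi₀, hr₀⟩ := hzero
    refine ⟨insert s (G.neighborSet s), Set.insert_nonempty _ _, hs.insert fun _ h _ => h,
      fun j => ?_⟩
    obtain ⟨u, hu, w, hw, huw⟩ := hKK i₀ j
    rw [hi₀, Set.mem_singleton_iff] at hu
    subst hu
    obtain ⟨q, hq, hqw⟩ := (hconn u w).exists_eq_or_adj_dist_le (r := r j) (by omega)
    exact ⟨q, hq, w, hw, hqw⟩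
  push Not at hzero
  choose K' r' hred using fun i => hs.exists_isBallReduction hconn hv (hK i) (hKne i) (hzero i)
  have hdist := hs.dist_induce_compl hconn
  obtain ⟨Q, ⟨q₀, hq₀⟩, hQ, hQK⟩ := ih _ (hn ▸ Finite.card_subtype_lt (x := s) fun h => h rfl)
    (hG.induce _) (hs.connected_induce_compl hconn hv) (fun i => Subtype.val ⁻¹' K' i) r'
    (fun i => (hred i).nonempty.preimage' (Subtype.range_coe.symm ▸ (hred i).subset_compl))
    (fun i => isClique_induce_iff.mpr ((hred i).isClique.subset (Set.image_preimage_subset _ _)))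
    (fun i j => by
      obtain ⟨u, hu, w, hw, huw⟩ := hKK i j
      obtain ⟨u', hu', w', hw', h⟩ := (hred i).exists_dist_le (hred j) hs hu hw huw
      exact ⟨⟨u', (hred i).subset_compl hu'⟩, hu', ⟨w', (hred j).subset_compl hw'⟩, hw',
        (hdist _ _).trans_le h⟩)
    rfl
  refine ⟨Subtype.val '' Q, ⟨q₀, q₀, hq₀, rfl⟩, isClique_induce_iff.mp hQ, fun i => ?_⟩
  obtain ⟨q, hq, u', hu', hqu'⟩ := hQK i
  obtain ⟨u, hu, h⟩ := (hred i).exists_dist_le_of_mem_reduction q u' hu'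
  exact ⟨q, ⟨q, hq, rfl⟩, u, hu, by rw [hdist] at hqu'; omega⟩

/-- For a connected chordal graph with radius `r` and diameter `d`, `2r ≤ d + 2`. -/
theorem chordal_two_rad_le_diam_add_two (G : SimpleGraph V) (hG : G.Connected)
    (hchordal : IsChordal G) :
    2 * grad G ≤ gdiam G + 2 := by
  have hdiam : ∀ u v, G.dist u v ≤ gdiam G := fun u v =>
    Finset.le_sup (f := fun p : V × V => G.dist p.1 p.2) (Finset.mem_univ (u, v))
  obtain ⟨Q, ⟨c, hc⟩, hQ, hQV⟩ := hchordal.exists_isClique_forall_exists_dist_le hG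
    (fun v => {v}) (fun _ => gdiam G / 2) (fun v => Set.singleton_nonempty v)
    (fun v => isClique_singleton v) (fun u v => ⟨u, rfl, v, rfl, by have := hdiam u v; omega⟩)
  have hecc : ecc G c ≤ gdiam G / 2 + 1 := Finset.sup_le fun v _ => by
    obtain ⟨q, hq, u, hu, hqv⟩ := hQV v
    subst u
    have : G.dist c v ≤ G.dist c q + G.dist q v := hG.dist_triangle
    have := hQ.dist_le_one hc hq
    omega
  have hrad : grad G ≤ ecc G c := Nat.sInf_le ⟨c, rfl⟩
  omega
end

section
/- If G is a connected chordal graph of order at least 2, then the set M = {v_i : i ≡ 0 (mod 3)} of vertices from a diametral path v_0,...,v_d is a multipacking of size at least ⌈(2·mp(G) − 1)/3⌉. -/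
open Finset

variable {V : Type*} [Fintype V] [DecidableEq V]

/-!
Every third vertex of a shortest path `x = v₀, …, v_d = y` is a multipacking: a ball of
radius `r` meets the path in indices spanning at most `2r`, hence in at most `r` multiples
of `3`. For the size, a ball of radius `ecc c` around any vertex `c` contains the whole graph,
so `mp G ≤ ecc c`, and in a chordal graph some vertex has eccentricity at most `⌊d/2⌋ + 1`;
then `2 · mp G + 1 ≤ d + 3`, i.e. `⌈(2 · mp G - 1)/3⌉ ≤ ⌊d/3⌋ + 1`, the number of vertices taken.

For the eccentricity bound let `b = ⌊d/2⌋`, so that all distances are at most `2b + 1`, and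
consider a region `W` that can only be left through a clique `A`, every vertex outside `W`
being within `b` of `A`. If some `w₀ ∈ W` is farther than `b` from `A`, let `C` be the
component of `w₀` in `W \ A` and `S ⊆ A` the vertices seeing `C`; chordality gives `t ∈ C`
adjacent to all of `S`. A shortest path from a vertex outside `C ∪ S` to `w₀` enters `C`
through some `s ∈ S` with `d(s, w₀) > b`, so that vertex is within `b` of `s`. Hence
`(C ∪ S, S ∪ {t})` is again such a pair with fewer unguarded vertices. Starting from
`(V, ∅)` this ends with a clique within `b` of every vertex, and any of its vertices has
eccentricity at most `b + 1`.
-/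

namespace SimpleGraph

variable {α : Type*} {G : SimpleGraph α}

namespace Walk

variable {u v : α}

theorem dist_add_dist_le_length {x : α} (q : G.Walk u v) (hx : x ∈ q.support) :
    G.dist u x + G.dist x v ≤ q.length := by
  classical
  have hlen := congrArg length (q.take_spec hx)
  rw [length_append] at hlen
  have := dist_le (q.takeUntil x hx)
  have := dist_le (q.dropUntil x hx)
  omega

theorem sub_le_dist_getVert (p : G.Walk u v) (hp : p.length = G.dist u v) {i j : ℕ}
    (hj : j ≤ p.length) : j - i ≤ G.dist (p.getVert i) (p.getVert j) := by
  have hfirst := dist_le (p.take i)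
  have hlast := dist_le (p.drop j)
  have htri₁ := (p.take i).reachable.dist_triangle_left v
  have htri₂ := (p.drop j).reachable.dist_triangle_right (p.getVert i)
  simp only [take_length, drop_length] at hfirst hlast
  omega

theorem card_image_getVert_filter_mod_three [DecidableEq α] (p : G.Walk u v)
    (hp : p.length = G.dist u v) :
    (((range (p.length + 1)).filter (fun i => i % 3 = 0)).image p.getVert).card =
      p.length / 3 + 1 := by
  have hthirds : (range (p.length + 1)).filter (fun i => i % 3 = 0) =
      (range (p.length / 3 + 1)).image (3 * ·) := by
    ext i
    simp only [mem_filter, mem_range, mem_image]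
    constructor
    · rintro ⟨hi, hi3⟩
      exact ⟨i / 3, by omega, by omega⟩
    · rintro ⟨k, hk, rfl⟩
      omega
  have hinj : Set.InjOn p.getVert ↑((range (p.length + 1)).filter (fun i => i % 3 = 0)) := by
    intro i hi j hj hij
    simp only [mem_coe, mem_filter, mem_range] at hi hj
    have hij' := p.sub_le_dist_getVert hp (i := i) (j := j) (by omega)
    have hji' := p.sub_le_dist_getVert hp (i := j) (j := i) (by omega)
    rw [hij, dist_self] at hij' hji'
    omega
  rw [card_image_of_injOn hinj, hthirds,
    card_image_of_injective _ fun a b (h : 3 * a = 3 * b) => by omega, card_range]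

theorem exists_shorter_of_adj_getVert (q : G.Walk u v) {i j : ℕ} (hij : i + 1 < j)
    (hj : j ≤ q.length) (hadj : G.Adj (q.getVert i) (q.getVert j)) :
    ∃ q' : G.Walk u v, q'.length < q.length ∧ q'.support ⊆ q.support := by
  refine ⟨(q.take i).append (cons hadj (q.drop j)), ?_, ?_⟩
  · simp only [length_append, take_length, length_cons, drop_length]
    omega
  · intro z hz
    simp only [support_append, support_cons, List.tail_cons, List.mem_append] at hz
    rcases hz with hz | hz
    · rw [support_take] at hz
      exact List.mem_of_mem_take hz
    · rw [drop_support_eq_support_drop_min] at hz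
      exact List.mem_of_mem_drop hz

theorem exists_shorter_of_not_isChordless {q : G.Walk u v} (hq : ¬q.IsChordless) :
    ∃ q' : G.Walk u v, q'.length < q.length ∧ q'.support ⊆ q.support := by
  obtain ⟨a, b, ha, hb, hab, hne⟩ : ∃ a b, a ∈ q.support ∧ b ∈ q.support ∧ G.Adj a b ∧
      s(a, b) ∉ q.edges := by
    simpa [isChordless_iff_forall_mem_edges] using hq
  obtain ⟨i, rfl, hi⟩ := mem_support_iff_exists_getVert.mp ha
  obtain ⟨j, rfl, hj⟩ := mem_support_iff_exists_getVert.mp hb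
  have hnext : ∀ k, k < q.length → s(q.getVert k, q.getVert (k + 1)) ∈ q.edges :=
    fun k hk => (mk_mem_edges_iff_exists q).mpr ⟨k, hk, rfl⟩
  rcases lt_trichotomy i j with hij | rfl | hij
  · refine q.exists_shorter_of_adj_getVert (i := i) (j := j) ?_ hj hab
    by_contra h
    obtain rfl : j = i + 1 := by omega
    exact hne (hnext i (by omega))
  · exact absurd rfl hab.ne
  · refine q.exists_shorter_of_adj_getVert (i := j) (j := i) ?_ hi hab.symm
    by_contra h
    obtain rfl : i = j + 1 := by omega
    exact hne (Sym2.eq_swap ▸ hnext j (by omega))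

theorem exists_shorter_of_not_isPath [DecidableEq α] {q : G.Walk u v} (hq : ¬q.IsPath) :
    ∃ q' : G.Walk u v, q'.length < q.length ∧ q'.support ⊆ q.support := by
  refine ⟨q.bypass, ?_, q.support_bypass_subset_support⟩
  by_contra! h
  exact hq (q.bypass_eq_self_of_length_le_length_bypass h ▸ q.bypass_isPath)

theorem exists_isPath_isChordless_of_mem {T : Set α} (q : G.Walk u v) (hv : v ∈ T) :
    ∃ w ∈ T, ∃ q' : G.Walk u w, q'.IsPath ∧ q'.IsChordless ∧ q'.support ⊆ q.support ∧
      ∀ x ∈ q'.support, x ∈ T → x = w := by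
  classical
  induction hn : q.length using Nat.strong_induction_on generalizing v with
  | _ n ih =>
  have shorter {v'} (hv' : v' ∈ T) (q' : G.Walk u v') (hlt : q'.length < n)
      (hsub : q'.support ⊆ q.support) : ∃ w ∈ T, ∃ r : G.Walk u w, r.IsPath ∧ r.IsChordless ∧
        r.support ⊆ q.support ∧ ∀ x ∈ r.support, x ∈ T → x = w := by
    obtain ⟨w, hw, r, hr⟩ := ih _ hlt q' hv' rfl
    exact ⟨w, hw, r, hr.1, hr.2.1, List.Subset.trans hr.2.2.1 hsub, hr.2.2.2⟩
  by_cases hfirst : ∃ x ∈ q.support, x ∈ T ∧ x ≠ v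
  · obtain ⟨x, hx, hxT, hxv⟩ := hfirst
    exact shorter hxT _ (hn ▸ length_takeUntil_lt_length hx hxv)
      (q.support_takeUntil_subset_support hx)
  by_cases hpath : q.IsPath
  · by_cases hchord : q.IsChordless
    · push Not at hfirst
      exact ⟨v, hv, q, hpath, hchord, List.Subset.refl _, hfirst⟩
    · obtain ⟨q', hlt, hsub⟩ := exists_shorter_of_not_isChordless hchord
      exact shorter hv q' (hn ▸ hlt) hsub
  · obtain ⟨q', hlt, hsub⟩ := exists_shorter_of_not_isPath hpath
    exact shorter hv q' (hn ▸ hlt) hsub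

theorem IsChordless.cons {x : α} {p : G.Walk u v} (hp : p.IsChordless) (h : G.Adj x u)
    (hx : ∀ y ∈ p.support, G.Adj x y → y = u) : (cons h p).IsChordless := by
  rw [isChordless_iff_forall_mem_edges] at hp ⊢
  intro a b ha hb hab
  rw [support_cons, List.mem_cons] at ha hb
  rw [edges_cons, List.mem_cons]
  rcases ha with rfl | ha <;> rcases hb with rfl | hb
  · exact absurd rfl hab.ne
  · exact Or.inl (by rw [hx b hb hab])
  · exact Or.inl (by rw [hx a ha hab.symm, Sym2.eq_swap])
  · exact Or.inr (hp ha hb hab)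

end Walk

theorem connected_induce_setOf_exists_walk {S : Set α} {w₀ : α} (hw₀ : w₀ ∈ S) :
    (G.induce {x | ∃ q : G.Walk x w₀, ∀ z ∈ q.support, z ∈ S}).Connected := by
  classical
  refine induce_connected_of_patches w₀ ⟨.nil, by simpa using hw₀⟩ fun {v} ⟨q, hq⟩ => ?_
  refine ⟨{z | z ∈ q.support}, fun z hz => ⟨q.dropUntil z hz, fun y hy =>
    hq y (q.support_dropUntil_subset_support hz hy)⟩, q.end_mem_support, q.start_mem_support,
    q.connected_induce_support.preconnected _ _⟩

end SimpleGraph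

open SimpleGraph

section Chordal

variable {α : Type*} {G : SimpleGraph α}

theorem IsChordal.length_le_one_of_isChordless (hch : IsChordal G) {a b z : α}
    {q : G.Walk a b} (hq : q.IsPath) (hqc : q.IsChordless) (hz : z ∉ q.support)
    (hza : G.Adj z a) (hzb : G.Adj z b) (hzq : ∀ x ∈ q.support, G.Adj z x → x = a ∨ x = b) :
    q.length ≤ 1 := by
  by_contra! hlen
  have hab : a ≠ b := by
    rintro rfl
    have := Walk.length_eq_zero_iff.mpr (Walk.isPath_iff_nil.mp hq)
    omega
  let cyc : G.Walk z z := .cons hza (q.concat hzb.symm)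
  have hedges : ∀ e, e ∈ cyc.edges ↔ e = s(z, a) ∨ e ∈ q.edges ∨ e = s(b, z) := by
    simp [cyc, Walk.edges_concat]
  have hcyc : cyc.IsCycle := by
    refine Walk.cons_isCycle_iff _ _ |>.mpr ⟨hq.concat hz _, fun he => ?_⟩
    rw [Walk.edges_concat, List.concat_eq_append, List.mem_append] at he
    rcases he with he | he
    · exact hz (q.fst_mem_support_of_mem_edges he)
    · simp only [List.mem_singleton, Sym2.eq, Sym2.rel_iff', Prod.mk.injEq,
        Prod.swap_prod_mk] at he
      rcases he with ⟨rfl, -⟩ | ⟨-, rfl⟩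
      · exact hz q.end_mem_support
      · exact hab rfl
  have hzedge : ∀ x ∈ q.support, G.Adj z x → s(z, x) ∈ cyc.edges := by
    intro x hx hzx
    rcases hzq x hx hzx with rfl | rfl
    · exact (hedges _).mpr (Or.inl rfl)
    · exact (hedges _).mpr (Or.inr (Or.inr Sym2.eq_swap))
  obtain ⟨u, w, hu, hw, huw, hne⟩ := hch cyc hcyc
    (by simp only [cyc, Walk.length_cons, Walk.length_concat]; omega)
  have hsupp : ∀ x ∈ cyc.support, x = z ∨ x ∈ q.support := by
    simp only [cyc, Walk.support_cons, Walk.support_concat, List.mem_cons, List.mem_append,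
      List.not_mem_nil, or_false]
    tauto
  apply hne
  rcases hsupp u hu with rfl | hqu <;> rcases hsupp w hw with rfl | hqw
  · exact absurd rfl huw.ne
  · exact hzedge w hqw huw
  · exact Sym2.eq_swap ▸ hzedge u hqu huw.symm
  · exact (hedges _).mpr (Or.inr (Or.inl (hqc.mem_edges hqu hqw huw)))

/-- Shortening `r.reverse` to a chordless path from `p` to a neighbour `w` of `s` and prefixing
`s'` gives a chordless cycle through `s`; chordality forces it to be a triangle, so `w = p`. -/
theorem IsChordal.adj_end_of_adj_start {t p s s' : α} (hch : IsChordal G) (r : G.Walk t p)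
    (hs'r : s' ∉ r.support) (hs'p : G.Adj s' p) (hs'only : ∀ x ∈ r.support, G.Adj s' x → x = p)
    (hsr : s ∉ r.support) (hss' : G.Adj s s') (hst : G.Adj s t) : G.Adj s p := by
  obtain ⟨w, hsw, r', hpath, hchordless, hsub, hsonly⟩ :=
    r.reverse.exists_isPath_isChordless_of_mem (T := {x | G.Adj s x}) hst
  rw [Walk.support_reverse] at hsub
  have hsub' : r'.support ⊆ r.support := fun x hx => List.mem_reverse.mp (hsub hx)
  let P : G.Walk s' w := .cons hs'p r'
  have hPlen : P.length ≤ 1 := by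
    refine hch.length_le_one_of_isChordless (z := s) ?_ ?_ ?_ hss' hsw ?_
    · exact hpath.cons fun h => hs'r (hsub' h)
    · exact hchordless.cons hs'p fun y hy => hs'only y (hsub' hy)
    · simp only [P, Walk.support_cons, List.mem_cons, not_or]
      exact ⟨hss'.ne, fun h => hsr (hsub' h)⟩
    · simp only [P, Walk.support_cons, List.mem_cons]
      rintro x (rfl | hx) hsx
      · exact Or.inl rfl
      · exact Or.inr (hsonly x hx hsx)
  have hr' : r'.length = 0 := by simp only [P, Walk.length_cons] at hPlen; omega
  obtain rfl := Walk.eq_of_length_eq_zero hr'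
  exact hsw

/-- A vertex `t ∈ C` seeing the most of `S` sees all of it: if it missed `s'`, the end `p` of a
walk in `C` from `t` to the first neighbour of `s'` would see everything `t` sees
(`IsChordal.adj_end_of_adj_start`) and `s'` as well. -/
theorem IsChordal.exists_adj_of_isClique [Finite α] (hch : IsChordal G) {C S : Set α}
    (hC : (G.induce C).Connected) (hSC : Disjoint S C) (hS : G.IsClique S)
    (hSadj : ∀ s ∈ S, ∃ c ∈ C, G.Adj s c) : ∃ t ∈ C, ∀ s ∈ S, G.Adj s t := by
  obtain ⟨c₀⟩ := hC.nonempty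
  obtain ⟨t, htC, htmax⟩ := C.exists_max_image (fun c => {s ∈ S | G.Adj s c}.ncard)
    C.toFinite ⟨c₀, c₀.2⟩
  refine ⟨t, htC, fun s' hs' => ?_⟩
  by_contra hs't
  obtain ⟨c', hc'C, hs'c'⟩ := hSadj s' hs'
  obtain ⟨q⟩ := hC.preconnected ⟨t, htC⟩ ⟨c', hc'C⟩
  have hqC : ∀ x ∈ (q.map (Embedding.induce C).toHom).support, x ∈ C := by
    simp only [Walk.support_map, List.mem_map]
    rintro x ⟨y, -, rfl⟩
    exact y.2
  obtain ⟨p, hs'p, r, -, -, hrq, hs'only⟩ :=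
    (q.map (Embedding.induce C).toHom).exists_isPath_isChordless_of_mem
      (T := {x | G.Adj s' x}) hs'c'
  have hrC : ∀ x ∈ r.support, x ∈ C := fun x hx => hqC x (hrq hx)
  have hnotS : ∀ s ∈ S, s ∉ r.support := fun s hs hsr => hSC.notMem_of_mem_left hs (hrC s hsr)
  have hsub : {s ∈ S | G.Adj s t} ⊂ {s ∈ S | G.Adj s p} := by
    refine ⟨fun s ⟨hs, hst⟩ => ⟨hs, ?_⟩, fun h => hs't (h ⟨hs', hs'p⟩).2⟩
    exact hch.adj_end_of_adj_start r (hnotS s' hs') hs'p hs'only (hnotS s hs)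
      (hS hs hs' fun h => hs't (h ▸ hst)) hst
  exact (htmax p (hrC p r.end_mem_support)).not_gt (Set.ncard_lt_ncard hsub (Set.toFinite _))

structure IsGuardedRegion (G : SimpleGraph α) (b : ℕ) (W A : Set α) : Prop where
  isClique : G.IsClique A
  mem_of_adj : ∀ x ∈ W \ A, ∀ y, G.Adj x y → y ∈ W
  exists_dist_le : ∀ u ∉ W, ∃ a ∈ A, G.dist u a ≤ b

theorem IsGuardedRegion.univ_empty (b : ℕ) : IsGuardedRegion G b Set.univ ∅ :=
  ⟨Set.pairwise_empty _, fun _ _ _ _ => trivial, fun _ hu => absurd trivial hu⟩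

variable [Finite α] {b : ℕ} {W A : Set α}

theorem IsGuardedRegion.exists_ncard_lt (h : IsGuardedRegion G b W A) (hch : IsChordal G)
    (hG : G.Connected) (hdist : ∀ u v, G.dist u v ≤ 2 * b + 1) {w₀ : α} (hw₀ : w₀ ∈ W)
    (hfar : ∀ a ∈ A, b < G.dist w₀ a) :
    ∃ W' A', IsGuardedRegion G b W' A' ∧ (W' \ A').ncard < (W \ A).ncard := by
  have hw₀A : w₀ ∉ A := fun hA => by simpa using hfar w₀ hA
  set C := {x | ∃ q : G.Walk x w₀, ∀ z ∈ q.support, z ∈ W \ A}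
  set S := {a ∈ A | ∃ c ∈ C, G.Adj a c}
  have hCWA : C ⊆ W \ A := fun x ⟨q, hq⟩ => hq x q.start_mem_support
  have hCadj : ∀ c ∈ C, ∀ y, G.Adj c y → y ∉ A → y ∈ C := by
    rintro c ⟨q, hq⟩ y hcy hyA
    refine ⟨.cons hcy.symm q, fun z hz => ?_⟩
    rw [Walk.support_cons, List.mem_cons] at hz
    rcases hz with rfl | hz
    · exact ⟨h.mem_of_adj c (hq c q.start_mem_support) z hcy, hyA⟩
    · exact hq z hz
  obtain ⟨t, htC, ht⟩ := hch.exists_adj_of_isClique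
    (connected_induce_setOf_exists_walk (S := W \ A) ⟨hw₀, hw₀A⟩)
    (Set.disjoint_left.mpr fun a ha haC => (hCWA haC).2 ha.1)
    (h.isClique.subset (Set.sep_subset _ _)) fun s hs => hs.2
  refine ⟨C ∪ S, insert t S, ⟨?_, ?_, ?_⟩, ?_⟩
  · exact (h.isClique.subset (Set.sep_subset _ _)).insert fun s hs _ => (ht s hs).symm
  · rintro x ⟨hx | hx, hxA'⟩ y hxy
    · by_cases hyA : y ∈ A
      · exact Or.inr ⟨hyA, x, hx, hxy.symm⟩
      · exact Or.inl (hCadj x hx y hxy hyA)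
    · exact absurd (Set.mem_insert_of_mem t hx) hxA'
  · intro u hu
    obtain ⟨q, hq⟩ := (hG u w₀).exists_walk_length_eq_dist
    obtain ⟨d, hd, hdu, hdw⟩ := q.exists_boundary_dart Cᶜ (fun huC => hu (Or.inl huC))
      (fun h => h (⟨.nil, by simpa using And.intro hw₀ hw₀A⟩ : w₀ ∈ C))
    have hdS : d.fst ∈ S := by
      have hdA : d.fst ∈ A := by
        by_contra hdA
        exact hdu (hCadj d.snd (of_not_not hdw) d.fst d.adj.symm hdA)
      exact ⟨hdA, d.snd, of_not_not hdw, d.adj⟩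
    have hsplit := q.dist_add_dist_le_length (q.dart_fst_mem_support_of_mem_darts hd)
    have hfar' := hfar d.fst hdS.1
    rw [dist_comm] at hfar'
    have := hdist u w₀
    exact ⟨d.fst, Set.mem_insert_of_mem t hdS, by omega⟩
  · refine Set.ncard_lt_ncard ⟨?_, fun hsub => ?_⟩
    · rintro x ⟨hx | hx, hxA'⟩
      · exact hCWA hx
      · exact absurd (Set.mem_insert_of_mem t hx) hxA'
    · exact (hsub (hCWA htC)).2 (Set.mem_insert t S)

theorem IsGuardedRegion.exists_isClique (h : IsGuardedRegion G b W A) (hch : IsChordal G)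
    (hG : G.Connected) (hdist : ∀ u v, G.dist u v ≤ 2 * b + 1) :
    ∃ K, G.IsClique K ∧ ∀ u, ∃ k ∈ K, G.dist u k ≤ b := by
  induction hn : (W \ A).ncard using Nat.strong_induction_on generalizing W A with
  | _ n ih =>
  by_cases hnear : ∀ w ∈ W, ∃ a ∈ A, G.dist w a ≤ b
  · refine ⟨A, h.isClique, fun u => ?_⟩
    by_cases hu : u ∈ W
    exacts [hnear u hu, h.exists_dist_le u hu]
  · push Not at hnear
    obtain ⟨w₀, hw₀, hfar⟩ := hnear
    obtain ⟨W', A', h', hlt⟩ := h.exists_ncard_lt hch hG hdist hw₀ hfar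
    exact ih _ (hn ▸ hlt) h' rfl

theorem IsChordal.exists_forall_dist_le (hch : IsChordal G) (hG : G.Connected)
    (hdist : ∀ u v, G.dist u v ≤ 2 * b + 1) : ∃ c, ∀ u, G.dist c u ≤ b + 1 := by
  obtain ⟨K, hK, hnear⟩ := (IsGuardedRegion.univ_empty b).exists_isClique hch hG hdist
  obtain ⟨c, hc, -⟩ := hnear hG.nonempty.some
  refine ⟨c, fun u => ?_⟩
  obtain ⟨k, hk, hku⟩ := hnear u
  have hck : G.dist c k ≤ 1 := by
    rcases eq_or_ne c k with rfl | hne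
    · simp
    · exact (dist_eq_one_iff_adj.mpr (hK hc hk hne)).le
  calc G.dist c u ≤ G.dist c k + G.dist k u := hG.dist_triangle
    _ ≤ b + 1 := by rw [dist_comm (u := k)]; omega

end Chordal

theorem card_le_of_forall_mod_three_eq_zero {s : Finset ℕ} {r : ℕ} (hr : 1 ≤ r)
    (hmod : ∀ i ∈ s, i % 3 = 0) (hsub : ∀ i ∈ s, ∀ j ∈ s, j - i ≤ 2 * r) : s.card ≤ r := by
  rcases s.eq_empty_or_nonempty with rfl | hne
  · simp
  have hs : s ⊆ (range (2 * r / 3 + 1)).image (fun k => s.min' hne + 3 * k) := by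
    intro j hj
    have hmin := s.min'_le j hj
    have := hsub _ (s.min'_mem hne) j hj
    have := hmod _ (s.min'_mem hne)
    have := hmod j hj
    exact mem_image.mpr ⟨(j - s.min' hne) / 3, mem_range.mpr (by omega), by omega⟩
  calc s.card ≤ (range (2 * r / 3 + 1)).card := (card_le_card hs).trans card_image_le
    _ ≤ r := by rw [card_range]; omega

theorem isMultipacking_image_getVert {G : SimpleGraph V} {x y : V} {p : G.Walk x y}
    (hG : G.Connected) (hp : p.length = G.dist x y) :
    IsMultipacking G (((range (p.length + 1)).filter (fun i => i % 3 = 0)).image p.getVert) := by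
  intro v r hr
  set I := ((range (p.length + 1)).filter (fun i => i % 3 = 0)).filter
    (fun i => G.dist v (p.getVert i) ≤ r)
  have hball : (((range (p.length + 1)).filter (fun i => i % 3 = 0)).image p.getVert) ∩
      gball G v r ⊆ I.image p.getVert := by
    intro z hz
    simp only [mem_inter, mem_image, gball, mem_filter, mem_univ, true_and] at hz
    obtain ⟨⟨i, hi, rfl⟩, hiv⟩ := hz
    exact mem_image_of_mem _ (mem_filter.mpr ⟨mem_filter.mpr hi, hiv⟩)
  refine (card_le_card hball).trans (card_image_le.trans ?_)
  refine card_le_of_forall_mod_three_eq_zero hr (fun i hi => ?_) fun i hi j hj => ?_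
  · simp only [I, mem_filter] at hi
    exact hi.1.2
  · simp only [I, mem_filter, mem_range] at hi hj
    have hij := p.sub_le_dist_getVert hp (i := i) (j := j) (by omega)
    have htri : G.dist (p.getVert i) (p.getVert j) ≤
        G.dist v (p.getVert i) + G.dist v (p.getVert j) :=
      dist_comm (u := v) ▸ hG.dist_triangle
    omega

theorem dist_le_gdiam {α : Type*} [Fintype α] (G : SimpleGraph α) (u v : α) :
    G.dist u v ≤ gdiam G :=
  Finset.le_sup (f := fun e : α × α => G.dist e.1 e.2) (mem_univ (u, v))

theorem mp_le_of_forall_dist_le {G : SimpleGraph V} {c : V} {r : ℕ} (hr : 1 ≤ r)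
    (hc : ∀ u, G.dist c u ≤ r) : mp G ≤ r := by
  refine csSup_le ⟨0, ∅, fun _ _ _ => by simp, rfl⟩ ?_
  rintro _ ⟨M, hM, rfl⟩
  have hball : M ∩ gball G c r = M :=
    inter_eq_left.mpr fun u _ => mem_filter.mpr ⟨mem_univ u, hc u⟩
  simpa [hball] using hM c r hr

theorem chordal_approx_multipacking_general (G : SimpleGraph V) (hG : G.Connected)
    (hchordal : IsChordal G)
    {x y : V} (p : G.Walk x y)
    (hshortest : p.length = G.dist x y) (hdiam : p.length = gdiam G) :
    IsMultipacking G
        (((Finset.range (p.length + 1)).filter (fun i => i % 3 = 0)).image p.getVert) ∧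
      (2 * mp G + 1) / 3 ≤
        (((Finset.range (p.length + 1)).filter (fun i => i % 3 = 0)).image p.getVert).card := by
  refine ⟨isMultipacking_image_getVert hG hshortest, ?_⟩
  have hdist : ∀ u v, G.dist u v ≤ 2 * (p.length / 2) + 1 := fun u v =>
    (dist_le_gdiam G u v).trans (by omega)
  obtain ⟨c, hc⟩ := hchordal.exists_forall_dist_le hG hdist
  have hmp := mp_le_of_forall_dist_le (Nat.le_add_left 1 _) hc
  rw [p.card_image_getVert_filter_mod_three hshortest]
  omega

/-- For a connected chordal graph of order at least 2, every third vertex of a diametral path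
forms a multipacking of size at least `⌈(2·mp(G) − 1)/3⌉`. -/
theorem chordal_approx_multipacking (G : SimpleGraph V) (hG : G.Connected)
    (hchordal : IsChordal G) (hcard : 2 ≤ Fintype.card V)
    {x y : V} (p : G.Walk x y) (hpath : p.IsPath)
    (hshortest : p.length = G.dist x y) (hdiam : p.length = gdiam G) :
    IsMultipacking G
        (((Finset.range (p.length + 1)).filter (fun i => i % 3 = 0)).image p.getVert) ∧
      (2 * mp G + 1) / 3 ≤
        (((Finset.range (p.length + 1)).filter (fun i => i % 3 = 0)).image p.getVert).card :=
  chordal_approx_multipacking_general G hG hchordal p hshortest hdiam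
end
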